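/- The quantity G(v) := sup{ |⟨w, v⟩| : w a unit elementary tensor in ℂ^{n₁} ⊗ ⋯ ⊗ ℂ^{n_p} } defines a norm on ℂ^{n₁} ⊗ ⋯ ⊗ ℂ^{n_p}, and G(v) ≤ ‖v‖ with equality if and only if v is a scalar multiple of an elementary tensor. -/

import Mathlib

noncomputable section

/-- The elementary tensor `a₁ ⊗ ⋯ ⊗ a_p` in `ℂ^{n₁} ⊗ ⋯ ⊗ ℂ^{n_p}`. -/
def tensP {p : ℕ} {n : Fin p → ℕ} (a : ∀ i, EuclideanSpace ℂ (Fin (n i))) :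
    EuclideanSpace ℂ (∀ i, Fin (n i)) :=
  WithLp.toLp 2 (fun f => ∏ i, a i (f i))

/-- `G(v) := sup { |⟨w, v⟩| : w a unit elementary tensor }`. -/
def Gnorm {p : ℕ} {n : Fin p → ℕ} (v : EuclideanSpace ℂ (∀ i, Fin (n i))) : ℝ :=
  sSup {x : ℝ | ∃ w : ∀ i, EuclideanSpace ℂ (Fin (n i)),
    ‖tensP w‖ = 1 ∧ x = ‖inner ℂ (tensP w) v‖}

/-!
Each `v ↦ |⟨w, v⟩|` is a seminorm bounded by `‖v‖`, so their supremum `G` is one too; it is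
definite because the standard basis vectors are unit elementary tensors. Normalizing the factors
shows that the unit elementary tensors are the image of the compact product of unit spheres, so
the supremum is attained, and `G v = ‖v‖` becomes the equality case of Cauchy–Schwarz.
-/

open scoped InnerProductSpace

section

variable {p : ℕ} {n : Fin p → ℕ}

lemma norm_tensP (a : ∀ i, EuclideanSpace ℂ (Fin (n i))) : ‖tensP a‖ = ∏ i, ‖a i‖ := by
  have hsq : ‖tensP a‖ ^ 2 = (∏ i, ‖a i‖) ^ 2 := by
    simp only [EuclideanSpace.norm_sq_eq, ← Finset.prod_pow]
    calc ∑ f : ∀ i, Fin (n i), ‖∏ i, a i (f i)‖ ^ 2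
        = ∑ f : ∀ i, Fin (n i), ∏ i, ‖a i (f i)‖ ^ 2 := by simp only [norm_prod, Finset.prod_pow]
      _ = ∏ i, ∑ j, ‖a i j‖ ^ 2 := (Fintype.prod_sum fun i (j : Fin (n i)) => ‖a i j‖ ^ 2).symm
  exact (sq_eq_sq₀ (norm_nonneg _) (by positivity)).mp hsq

lemma tensP_smul (c : Fin p → ℂ) (a : ∀ i, EuclideanSpace ℂ (Fin (n i))) :
    tensP (fun i => c i • a i) = (∏ i, c i) • tensP a := by
  ext f
  simp [tensP, Finset.prod_mul_distrib]

lemma tensP_single (f : ∀ i, Fin (n i)) :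
    tensP (fun i => EuclideanSpace.single (f i) (1 : ℂ)) = EuclideanSpace.single f 1 := by
  ext g
  simp [tensP, PiLp.single_apply, Finset.prod_boole, funext_iff]

lemma continuous_tensP : Continuous fun a : ∀ i, EuclideanSpace ℂ (Fin (n i)) => tensP a := by
  unfold tensP
  fun_prop

lemma norm_tensP_eq_one {u : ∀ i, EuclideanSpace ℂ (Fin (n i))} (hu : ∀ i, ‖u i‖ = 1) :
    ‖tensP u‖ = 1 := by
  simp [norm_tensP, hu]

lemma exists_tensP_eq_norm_smul {a : ∀ i, EuclideanSpace ℂ (Fin (n i))} (ha : tensP a ≠ 0) :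
    ∃ u : ∀ i, EuclideanSpace ℂ (Fin (n i)),
      (∀ i, ‖u i‖ = 1) ∧ tensP a = (‖tensP a‖ : ℂ) • tensP u := by
  have hprod : ∏ i, ‖a i‖ ≠ 0 := by rwa [← norm_tensP, norm_ne_zero_iff]
  have hai : ∀ i, ‖a i‖ ≠ 0 := fun i => Finset.prod_ne_zero_iff.mp hprod i (Finset.mem_univ i)
  refine ⟨fun i => (‖a i‖ : ℂ)⁻¹ • a i, fun i => ?_, ?_⟩
  · rw [norm_smul, norm_inv, Complex.norm_real, norm_norm, inv_mul_cancel₀ (hai i)]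
  · rw [tensP_smul, smul_smul, norm_tensP, Complex.ofReal_prod, ← Finset.prod_mul_distrib,
      Finset.prod_eq_one fun i _ => mul_inv_cancel₀ (Complex.ofReal_ne_zero.mpr (hai i)), one_smul]

lemma Gnorm_nonneg (v : EuclideanSpace ℂ (∀ i, Fin (n i))) : 0 ≤ Gnorm v :=
  Real.sSup_nonneg fun _ ⟨_, _, hx⟩ => hx ▸ norm_nonneg _

lemma Gnorm_le {v : EuclideanSpace ℂ (∀ i, Fin (n i))} {c : ℝ} (hc : 0 ≤ c)
    (h : ∀ w : ∀ i, EuclideanSpace ℂ (Fin (n i)), ‖tensP w‖ = 1 → ‖⟪tensP w, v⟫_ℂ‖ ≤ c) :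
    Gnorm v ≤ c :=
  Real.sSup_le (fun _ ⟨w, hw, hx⟩ => hx ▸ h w hw) hc

lemma norm_inner_tensP_le_norm (v : EuclideanSpace ℂ (∀ i, Fin (n i)))
    {w : ∀ i, EuclideanSpace ℂ (Fin (n i))} (hw : ‖tensP w‖ = 1) : ‖⟪tensP w, v⟫_ℂ‖ ≤ ‖v‖ := by
  simpa [hw] using norm_inner_le_norm (𝕜 := ℂ) (tensP w) v

lemma Gnorm_le_norm (v : EuclideanSpace ℂ (∀ i, Fin (n i))) : Gnorm v ≤ ‖v‖ :=
  Gnorm_le (norm_nonneg v) fun _ => norm_inner_tensP_le_norm v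

lemma norm_inner_le_Gnorm (v : EuclideanSpace ℂ (∀ i, Fin (n i)))
    {w : ∀ i, EuclideanSpace ℂ (Fin (n i))} (hw : ‖tensP w‖ = 1) :
    ‖⟪tensP w, v⟫_ℂ‖ ≤ Gnorm v :=
  le_csSup ⟨‖v‖, fun _ ⟨_, hu, hx⟩ => hx ▸ norm_inner_tensP_le_norm v hu⟩ ⟨w, hw, rfl⟩

lemma norm_apply_le_Gnorm (v : EuclideanSpace ℂ (∀ i, Fin (n i))) (f : ∀ i, Fin (n i)) :
    ‖v f‖ ≤ Gnorm v := by
  have h := norm_inner_le_Gnorm v (w := fun i => EuclideanSpace.single (f i) 1)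
    (by rw [tensP_single, PiLp.norm_single, norm_one])
  simpa [tensP_single, EuclideanSpace.inner_single_left] using h

lemma Gnorm_zero : Gnorm (0 : EuclideanSpace ℂ (∀ i, Fin (n i))) = 0 :=
  le_antisymm (Gnorm_le le_rfl fun _ _ => by simp) (Gnorm_nonneg 0)

lemma Gnorm_eq_zero_iff {v : EuclideanSpace ℂ (∀ i, Fin (n i))} : Gnorm v = 0 ↔ v = 0 := by
  refine ⟨fun h => ?_, fun h => h ▸ Gnorm_zero⟩
  ext f
  simpa [h] using norm_apply_le_Gnorm v f

lemma Gnorm_smul_le (c : ℂ) (v : EuclideanSpace ℂ (∀ i, Fin (n i))) :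
    Gnorm (c • v) ≤ ‖c‖ * Gnorm v :=
  Gnorm_le (by positivity [Gnorm_nonneg v]) fun w hw => by
    rw [inner_smul_right, norm_mul]
    exact mul_le_mul_of_nonneg_left (norm_inner_le_Gnorm v hw) (norm_nonneg c)

lemma Gnorm_smul (c : ℂ) (v : EuclideanSpace ℂ (∀ i, Fin (n i))) :
    Gnorm (c • v) = ‖c‖ * Gnorm v := by
  refine le_antisymm (Gnorm_smul_le c v) ?_
  rcases eq_or_ne c 0 with rfl | hc
  · simp [Gnorm_nonneg]
  calc ‖c‖ * Gnorm v = ‖c‖ * Gnorm (c⁻¹ • c • v) := by rw [inv_smul_smul₀ hc]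
    _ ≤ ‖c‖ * (‖c⁻¹‖ * Gnorm (c • v)) := by gcongr; exact Gnorm_smul_le _ _
    _ = Gnorm (c • v) := by rw [← mul_assoc, ← norm_mul, mul_inv_cancel₀ hc, norm_one, one_mul]

lemma Gnorm_add_le (v w : EuclideanSpace ℂ (∀ i, Fin (n i))) :
    Gnorm (v + w) ≤ Gnorm v + Gnorm w :=
  Gnorm_le (add_nonneg (Gnorm_nonneg v) (Gnorm_nonneg w)) fun u hu => by
    rw [inner_add_right]
    exact (norm_add_le _ _).trans (add_le_add (norm_inner_le_Gnorm v hu) (norm_inner_le_Gnorm w hu))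

lemma exists_norm_inner_eq_Gnorm [Nonempty (∀ i, Fin (n i))]
    (v : EuclideanSpace ℂ (∀ i, Fin (n i))) :
    ∃ w : ∀ i, EuclideanSpace ℂ (Fin (n i)), ‖tensP w‖ = 1 ∧ ‖⟪tensP w, v⟫_ℂ‖ = Gnorm v := by
  set K := Set.univ.pi fun i => Metric.sphere (0 : EuclideanSpace ℂ (Fin (n i))) 1
  have hK : ∀ u, u ∈ K ↔ ∀ i, ‖u i‖ = 1 := by simp [K]
  obtain ⟨f⟩ := ‹Nonempty (∀ i, Fin (n i))›
  have hKne : K.Nonempty :=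
    ⟨fun i => EuclideanSpace.single (f i) 1, (hK _).mpr fun i => by simp⟩
  obtain ⟨w, hwK, hmax⟩ := (isCompact_univ_pi fun i => isCompact_sphere 0 1).exists_isMaxOn hKne
    (continuous_tensP.inner (𝕜 := ℂ) continuous_const).norm.continuousOn
  have hw := norm_tensP_eq_one ((hK w).mp hwK)
  refine ⟨w, hw, le_antisymm (norm_inner_le_Gnorm v hw) (Gnorm_le (norm_nonneg _) fun a ha => ?_)⟩
  obtain ⟨u, hu, hau⟩ := exists_tensP_eq_norm_smul (a := a) (by rw [← norm_ne_zero_iff, ha]; simp)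
  rw [hau, ha, Complex.ofReal_one, one_smul]
  exact hmax ((hK u).mpr hu)

lemma Gnorm_smul_tensP (c : ℂ) (a : ∀ i, EuclideanSpace ℂ (Fin (n i))) :
    Gnorm (c • tensP a) = ‖c • tensP a‖ := by
  rcases eq_or_ne (tensP a) 0 with ha | ha
  · simp [ha, Gnorm_zero]
  obtain ⟨u, hu, hau⟩ := exists_tensP_eq_norm_smul ha
  have hu1 := norm_tensP_eq_one hu
  refine le_antisymm (Gnorm_le_norm _) ?_
  calc ‖c • tensP a‖ = ‖⟪tensP u, c • tensP a⟫_ℂ‖ := by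
        rw [hau, smul_smul, inner_smul_right, inner_self_eq_norm_sq_to_K]
        simp [norm_smul, hu1]
    _ ≤ Gnorm (c • tensP a) := norm_inner_le_Gnorm _ hu1

lemma exists_eq_smul_tensP_of_Gnorm_eq_norm {v : EuclideanSpace ℂ (∀ i, Fin (n i))}
    (hv : Gnorm v = ‖v‖) : ∃ (c : ℂ) (w : ∀ i, EuclideanSpace ℂ (Fin (n i))), v = c • tensP w := by
  rcases isEmpty_or_nonempty (∀ i, Fin (n i)) with _ | _
  · exact ⟨0, 0, Subsingleton.elim _ _⟩
  obtain ⟨w, hw, hwv⟩ := exists_norm_inner_eq_Gnorm v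
  have hcs : ‖⟪tensP w, v⟫_ℂ‖ = ‖tensP w‖ * ‖v‖ := by rw [hw, one_mul, hwv, hv]
  obtain hw0 | ⟨c, hc⟩ := ((norm_inner_eq_norm_tfae ℂ _ _).out 0 2).mp hcs
  · simp [hw0] at hw
  · exact ⟨c, w, hc⟩

end

theorem stmt16_general {p : ℕ} {n : Fin p → ℕ} :
    (∀ v : EuclideanSpace ℂ (∀ i, Fin (n i)), 0 ≤ Gnorm v) ∧
    (∀ v : EuclideanSpace ℂ (∀ i, Fin (n i)), Gnorm v = 0 ↔ v = 0) ∧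
    (∀ (c : ℂ) (v : EuclideanSpace ℂ (∀ i, Fin (n i))),
      Gnorm (c • v) = ‖c‖ * Gnorm v) ∧
    (∀ v w : EuclideanSpace ℂ (∀ i, Fin (n i)), Gnorm (v + w) ≤ Gnorm v + Gnorm w) ∧
    (∀ v : EuclideanSpace ℂ (∀ i, Fin (n i)), Gnorm v ≤ ‖v‖ ∧
      (Gnorm v = ‖v‖ ↔ ∃ (c : ℂ) (w : ∀ i, EuclideanSpace ℂ (Fin (n i))),
        v = c • tensP w)) :=
  ⟨Gnorm_nonneg, fun _ => Gnorm_eq_zero_iff, Gnorm_smul, Gnorm_add_le, fun _ =>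
    ⟨Gnorm_le_norm _, exists_eq_smul_tensP_of_Gnorm_eq_norm,
      fun ⟨c, w, hv⟩ => hv ▸ Gnorm_smul_tensP c w⟩⟩

/-- `G` is a norm, `G(v) ≤ ‖v‖`, with equality iff `v` is a scalar multiple of an
elementary tensor. -/
theorem stmt16 {p : ℕ} {n : Fin p → ℕ} (hn : ∀ i, 0 < n i) :
    (∀ v : EuclideanSpace ℂ (∀ i, Fin (n i)), 0 ≤ Gnorm v) ∧
    (∀ v : EuclideanSpace ℂ (∀ i, Fin (n i)), Gnorm v = 0 ↔ v = 0) ∧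
    (∀ (c : ℂ) (v : EuclideanSpace ℂ (∀ i, Fin (n i))),
      Gnorm (c • v) = ‖c‖ * Gnorm v) ∧
    (∀ v w : EuclideanSpace ℂ (∀ i, Fin (n i)), Gnorm (v + w) ≤ Gnorm v + Gnorm w) ∧
    (∀ v : EuclideanSpace ℂ (∀ i, Fin (n i)), Gnorm v ≤ ‖v‖ ∧
      (Gnorm v = ‖v‖ ↔ ∃ (c : ℂ) (w : ∀ i, EuclideanSpace ℂ (Fin (n i))),
        v = c • tensP w)) :=
  stmt16_general
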